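/- Let m = m₋₁ ⊕ m₋₂ and m′ = m′₋₁ ⊕ m′₋₂ be graded real Lie algebras with dim m₋₁ = dim m′₋₁ = 3 and dim m₋₂ = dim m′₋₂ = 2, such that all brackets involving an element of degree −2 vanish and the bracket maps Λ²m₋₁ → m₋₂ and Λ²m′₋₁ → m′₋₂ are surjective. Then there exists a graded Lie algebra isomorphism from m to m′. In other words, there is only one isomorphism class of non-degenerate (3,5) nilpotent graded Lie algebra. -/

import Mathlib

/-
Since `dim Λ²m₋₁ = 3 > 2 = dim m₋₂`, the bracket `Λ²m₋₁ → m₋₂` has a nonzero kernel, and every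
bivector of a three-dimensional space is decomposable; hence `m₋₁` has a basis `e₀, e₁, e₂` with
`[e₀, e₁] = 0`. Non-degeneracy then makes `e₃ = [e₀, e₂]`, `e₄ = [e₁, e₂]` a basis of `m₋₂`. So
every such algebra has a graded basis with the same structure constants, and matching these bases
gives the isomorphism.
-/

noncomputable section

open Module Submodule

lemma exists_span_triple_eq_of_finrank_eq_three {K M : Type*} [Field K] [AddCommGroup M]
    [Module K M] {V : Submodule K M} (hV : finrank K V = 3) :
    ∃ a b c : M, span K {a, b, c} = V := by
  have : FiniteDimensional K V := .of_finrank_pos (by omega)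
  let B := finBasisOfFinrankEq K V hV
  refine ⟨B 0, B 1, B 2, ?_⟩
  have hB := congrArg (map V.subtype) B.span_eq
  rw [map_subtype_top, map_span, ← Set.range_comp] at hB
  refine (congrArg (span K) ?_).trans hB
  ext
  simp [Fin.exists_fin_succ]
  tauto

lemma exists_basis_fin_five_of_span_eq {K M : Type*} [Field K] [AddCommGroup M] [Module K M]
    {V W : Submodule K M} (hsup : V ⊔ W = ⊤) (hinf : V ⊓ W = ⊥)
    (hV : finrank K V = 3) (hW : finrank K W = 2) {a b c d e : M}
    (habc : span K {a, b, c} = V) (hde : span K {d, e} = W) :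
    ∃ B : Basis (Fin 5) K M, ⇑B = ![a, b, c, d, e] := by
  have : FiniteDimensional K V := .of_finrank_pos (by omega)
  have : FiniteDimensional K W := .of_finrank_pos (by omega)
  have hM : finrank K M = 5 := by
    have h := finrank_sup_add_finrank_inf_eq V W
    rw [hsup, hinf, hV, hW, finrank_top, finrank_bot] at h
    omega
  have hspan : ⊤ ≤ span K (Set.range ![a, b, c, d, e]) := by
    rw [← hsup, ← habc, ← hde, ← span_union]
    refine span_mono fun x hx => ?_
    simp at hx ⊢
    tauto
  exact ⟨basisOfTopLeSpanOfCardEqFinrank _ hspan (by simp [hM]), by simp⟩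

lemma exists_lieEquiv_apply_basis {R L L' ι : Type*} [CommRing R] [LieRing L] [LieAlgebra R L]
    [LieRing L'] [LieAlgebra R L'] (B : Basis ι R L) (B' : Basis ι R L')
    (h : ∀ i j, B.equiv B' (Equiv.refl ι) ⁅B i, B j⁆ = ⁅B' i, B' j⁆) :
    ∃ e : L ≃ₗ⁅R⁆ L', ∀ i, e (B i) = B' i := by
  let φ := B.equiv B' (Equiv.refl ι)
  have hφ : ∀ x y, φ ⁅x, y⁆ = ⁅φ x, φ y⁆ := by
    have key : (LieAlgebra.ad R L : L →ₗ[R] Module.End R L).compr₂ φ.toLinearMap =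
        (LieAlgebra.ad R L' : L' →ₗ[R] Module.End R L').compl₁₂ φ.toLinearMap φ.toLinearMap :=
      LinearMap.ext_basis B B fun i j => by simpa [φ, Basis.equiv_apply] using h i j
    exact fun x y => LinearMap.congr_fun₂ key x y
  exact ⟨{ φ with map_lie' := hφ _ _ }, fun i => B.equiv_apply i B' (Equiv.refl ι)⟩

def standard35Bracket {M : Type*} [AddCommGroup M] (v : Fin 5 → M) : Fin 5 → Fin 5 → M :=
  ![![0, 0, v 3, 0, 0],
    ![0, 0, v 4, 0, 0],
    ![-v 3, -v 4, 0, 0, 0],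
    ![0, 0, 0, 0, 0],
    ![0, 0, 0, 0, 0]]

lemma map_standard35Bracket {M N F : Type*} [AddCommGroup M] [AddCommGroup N] [FunLike F M N]
    [AddMonoidHomClass F M N] (f : F) (v : Fin 5 → M) (i j : Fin 5) :
    f (standard35Bracket v i j) = standard35Bracket (f ∘ v) i j := by
  fin_cases i <;> fin_cases j <;> simp [standard35Bracket]

lemma lie_eq_standard35Bracket {L : Type*} [LieRing L]
    {v : Fin 5 → L} (h01 : ⁅v 0, v 1⁆ = 0) (h02 : ⁅v 0, v 2⁆ = v 3) (h12 : ⁅v 1, v 2⁆ = v 4)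
    (h3 : ∀ x : L, ⁅x, v 3⁆ = 0) (h4 : ∀ x : L, ⁅x, v 4⁆ = 0) (i j : Fin 5) :
    ⁅v i, v j⁆ = standard35Bracket v i j := by
  have h3' : ∀ x : L, ⁅v 3, x⁆ = 0 := fun x => by rw [← lie_skew, h3, neg_zero]
  have h4' : ∀ x : L, ⁅v 4, x⁆ = 0 := fun x => by rw [← lie_skew, h4, neg_zero]
  have h10 : ⁅v 1, v 0⁆ = 0 := by rw [← lie_skew, h01, neg_zero]
  have h20 : ⁅v 2, v 0⁆ = -v 3 := by rw [← lie_skew, h02]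
  have h21 : ⁅v 2, v 1⁆ = -v 4 := by rw [← lie_skew, h12]
  fin_cases i <;> fin_cases j <;> simp [standard35Bracket, *]

section

variable {K L : Type*} [Field K] [LieRing L] [LieAlgebra K L]

lemma exists_lie_eq_zero_of_lie_relation {a b c : L} {α β γ : K} (hγ : γ ≠ 0)
    (hrel : α • ⁅a, b⁆ + β • ⁅a, c⁆ + γ • ⁅b, c⁆ = 0) :
    ∃ x y z : L, span K {x, y, z} = span K {a, b, c} ∧ ⁅x, y⁆ = 0 := by
  refine ⟨β • a + γ • b, γ • c - α • a, a, le_antisymm ?_ ?_, ?_⟩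
  · simp only [span_le, Set.insert_subset_iff, Set.singleton_subset_iff, SetLike.mem_coe,
      mem_span_triple]
    exact ⟨⟨β, γ, 0, by module⟩, ⟨-α, 0, γ, by module⟩, ⟨1, 0, 0, by module⟩⟩
  · simp only [span_le, Set.insert_subset_iff, Set.singleton_subset_iff, SetLike.mem_coe,
      mem_span_triple]
    refine ⟨⟨0, 0, 1, by module⟩, ⟨γ⁻¹, 0, -γ⁻¹ * β, ?_⟩, ⟨0, γ⁻¹, γ⁻¹ * α, ?_⟩⟩ <;>
      match_scalars <;> field_simp <;> ring
  · calc ⁅β • a + γ • b, γ • c - α • a⁆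
        = γ • (α • ⁅a, b⁆ + β • ⁅a, c⁆ + γ • ⁅b, c⁆) := by
          simp only [add_lie, lie_sub, lie_smul, smul_lie, lie_self,
            ← lie_skew b a]
          module
      _ = 0 := by rw [hrel, smul_zero]

lemma exists_lie_eq_zero_of_not_linearIndependent {a b c : L}
    (h : ¬ LinearIndependent K ![⁅a, b⁆, ⁅a, c⁆, ⁅b, c⁆]) :
    ∃ x y z : L, span K {x, y, z} = span K {a, b, c} ∧ ⁅x, y⁆ = 0 := by
  obtain ⟨g, hg, i, hi⟩ := Fintype.not_linearIndependent_iff.mp h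
  simp only [Fin.sum_univ_three, Matrix.cons_val] at hg
  -- relabel `a, b, c` so that the nonzero coefficient sits on the last bracket
  fin_cases i <;> dsimp at hi
  · obtain ⟨x, y, z, hs, hxy⟩ := exists_lie_eq_zero_of_lie_relation (a := c) (b := a) (c := b)
      (α := -g 1) (β := -g 2) hi (by rw [← lie_skew c a, ← lie_skew c b, ← hg]; module)
    exact ⟨x, y, z, by rw [hs]; congr 1; ext; simp; tauto, hxy⟩
  · obtain ⟨x, y, z, hs, hxy⟩ := exists_lie_eq_zero_of_lie_relation (a := b) (b := a) (c := c)
      (α := -g 0) (β := g 2) hi (by rw [← lie_skew b a, ← hg]; module)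
    exact ⟨x, y, z, by rw [hs, Set.insert_comm], hxy⟩
  · exact exists_lie_eq_zero_of_lie_relation hi hg

lemma exists_lie_eq_zero_of_finrank_lt {V W : Submodule K L} [FiniteDimensional K W]
    (hV : finrank K V = 3) (hW : finrank K W < 3) (hVW : ∀ x ∈ V, ∀ y ∈ V, ⁅x, y⁆ ∈ W) :
    ∃ x y z : L, span K {x, y, z} = V ∧ ⁅x, y⁆ = 0 := by
  obtain ⟨a, b, c, rfl⟩ := exists_span_triple_eq_of_finrank_eq_three hV
  have ha : a ∈ span K {a, b, c} := subset_span (by simp)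
  have hb : b ∈ span K {a, b, c} := subset_span (by simp)
  have hc : c ∈ span K {a, b, c} := subset_span (by simp)
  let v : Fin 3 → W := ![⟨_, hVW a ha b hb⟩, ⟨_, hVW a ha c hc⟩, ⟨_, hVW b hb c hc⟩]
  have hv : ¬ LinearIndependent K v := fun h => by
    simpa using h.fintype_card_le_finrank.trans_lt hW
  refine exists_lie_eq_zero_of_not_linearIndependent fun h => hv (.of_comp W.subtype ?_)
  convert h using 1
  ext i
  fin_cases i <;> rfl

lemma exists_lie_eq_zero_and_span_lie_eq {m1 m2 : Submodule K L} [FiniteDimensional K m2]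
    (hd1 : finrank K m1 = 3) (hd2 : finrank K m2 < 3)
    (hbr : ∀ x ∈ m1, ∀ y ∈ m1, ⁅x, y⁆ ∈ m2)
    (hgen : m2 ≤ span K {z | ∃ x ∈ m1, ∃ y ∈ m1, z = ⁅x, y⁆}) :
    ∃ x y z : L, span K {x, y, z} = m1 ∧ span K {⁅x, z⁆, ⁅y, z⁆} = m2 ∧ ⁅x, y⁆ = 0 := by
  obtain ⟨x, y, z, hs, hxy⟩ := exists_lie_eq_zero_of_finrank_lt hd1 hd2 hbr
  have hx : x ∈ m1 := hs ▸ subset_span (by simp)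
  have hy : y ∈ m1 := hs ▸ subset_span (by simp)
  have hz : z ∈ m1 := hs ▸ subset_span (by simp)
  refine ⟨x, y, z, hs, le_antisymm ?_ (hgen.trans (span_le.2 ?_)), hxy⟩
  · rw [span_le, Set.insert_subset_iff, Set.singleton_subset_iff]
    exact ⟨hbr x hx z hz, hbr y hy z hz⟩
  rintro _ ⟨u, hu, v, hv, rfl⟩
  have huv : ⁅u, v⁆ ∈ map₂ (LieAlgebra.ad K L : L →ₗ[K] Module.End K L) m1 m1 :=
    apply_mem_map₂ _ hu hv
  rw [← hs, map₂_span_span] at huv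
  refine span_le.2 ?_ huv
  have hyx : ⁅y, x⁆ = 0 := by rw [← lie_skew, hxy, neg_zero]
  have hxz : ⁅x, z⁆ ∈ span K {⁅x, z⁆, ⁅y, z⁆} := subset_span (by simp)
  have hyz : ⁅y, z⁆ ∈ span K {⁅x, z⁆, ⁅y, z⁆} := subset_span (by simp)
  simp only [Set.image2_subset_iff, Set.forall_mem_insert, Set.mem_singleton_iff, forall_eq]
  simp only [LieHom.coe_toLinearMap, LieAlgebra.ad_apply, lie_self, hxy, hyx, zero_mem,
    true_and, and_true, SetLike.mem_coe]
  exact ⟨hxz, hyz, by rw [← lie_skew z x]; exact neg_mem hxz,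
    by rw [← lie_skew z y]; exact neg_mem hyz⟩

lemma exists_basis_lie_eq_standard35Bracket {m1 m2 : Submodule K L}
    (hsup : m1 ⊔ m2 = ⊤) (hinf : m1 ⊓ m2 = ⊥) (hd1 : finrank K m1 = 3) (hd2 : finrank K m2 = 2)
    (hbr : ∀ x ∈ m1, ∀ y ∈ m1, ⁅x, y⁆ ∈ m2) (hcent : ∀ (x : L), ∀ y ∈ m2, ⁅x, y⁆ = 0)
    (hgen : m2 ≤ span K {z | ∃ x ∈ m1, ∃ y ∈ m1, z = ⁅x, y⁆}) :
    ∃ B : Basis (Fin 5) K L, span K {B 0, B 1, B 2} = m1 ∧ span K {B 3, B 4} = m2 ∧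
      ∀ i j, ⁅B i, B j⁆ = standard35Bracket B i j := by
  have : FiniteDimensional K m2 := .of_finrank_pos (by omega)
  obtain ⟨x, y, z, h1, h2, hxy⟩ := exists_lie_eq_zero_and_span_lie_eq hd1 (by omega) hbr hgen
  obtain ⟨B, hB⟩ := exists_basis_fin_five_of_span_eq hsup hinf hd1 hd2 h1 h2
  have central : ∀ {u}, u ∈ ({⁅x, z⁆, ⁅y, z⁆} : Set L) → ∀ w, ⁅w, u⁆ = 0 :=
    fun hu w => hcent w _ (h2 ▸ subset_span hu)
  refine ⟨B, by simpa [hB] using h1, by simpa [hB] using h2,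
    lie_eq_standard35Bracket ?_ ?_ ?_ ?_ ?_⟩ <;> simp [hB, hxy, central]

end

theorem unique_nondegenerate_35_graded_nilpotent
    (m m' : Type*) [LieRing m] [LieAlgebra ℝ m] [LieRing m'] [LieAlgebra ℝ m']
    (m1 m2 : Submodule ℝ m) (m1' m2' : Submodule ℝ m')
    -- vector space decompositions
    (hsup : m1 ⊔ m2 = ⊤) (hinf : m1 ⊓ m2 = ⊥)
    (hsup' : m1' ⊔ m2' = ⊤) (hinf' : m1' ⊓ m2' = ⊥)
    -- dimensions
    (hd1 : finrank ℝ ↥m1 = 3) (hd2 : finrank ℝ ↥m2 = 2)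
    (hd1' : finrank ℝ ↥m1' = 3) (hd2' : finrank ℝ ↥m2' = 2)
    -- grading: [m₋₁, m₋₁] ⊆ m₋₂ and m₋₂ is central ([m, m₋₂] = 0)
    (hbr : ∀ x ∈ m1, ∀ y ∈ m1, ⁅x, y⁆ ∈ m2)
    (hcent : ∀ (x : m), ∀ y ∈ m2, ⁅x, y⁆ = 0)
    (hbr' : ∀ x ∈ m1', ∀ y ∈ m1', ⁅x, y⁆ ∈ m2')
    (hcent' : ∀ (x : m'), ∀ y ∈ m2', ⁅x, y⁆ = 0)
    -- non-degeneracy: the bracket map Λ²m₋₁ → m₋₂ is surjective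
    (hgen : m2 ≤ Submodule.span ℝ {z | ∃ x ∈ m1, ∃ y ∈ m1, z = ⁅x, y⁆})
    (hgen' : m2' ≤ Submodule.span ℝ {z | ∃ x ∈ m1', ∃ y ∈ m1', z = ⁅x, y⁆}) :
    ∃ e : m ≃ₗ⁅ℝ⁆ m',
      Submodule.map e.toLinearEquiv.toLinearMap m1 = m1' ∧
      Submodule.map e.toLinearEquiv.toLinearMap m2 = m2' := by
  obtain ⟨B, hB1, hB2, hB⟩ :=
    exists_basis_lie_eq_standard35Bracket hsup hinf hd1 hd2 hbr hcent hgen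
  obtain ⟨B', hB1', hB2', hB'⟩ :=
    exists_basis_lie_eq_standard35Bracket hsup' hinf' hd1' hd2' hbr' hcent' hgen'
  obtain ⟨e, he⟩ := exists_lieEquiv_apply_basis B B' fun i j => by
    rw [hB, hB', map_standard35Bracket]
    congr
    ext
    simp [Basis.equiv_apply]
  refine ⟨e, ?_, ?_⟩
  · rw [← hB1, ← hB1', map_span]
    simp [Set.image_insert_eq, he]
  · rw [← hB2, ← hB2', map_span]
    simp [Set.image_insert_eq, he]
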